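/- arXiv:2402.01144 — 2 statements merged into one kernel-verified Lean document; each statement's English description precedes it below -/
import Mathlib

section
/- For a secret of bit-length ℓ and threshold k ≥ 2, in the evolving k-threshold scheme over F_2[x] where the t-th share is Z_t = ∑_{j=0}^{k−2} r_j y_t^j + s y_t^{k−1} (mod x^{(ℓ_t−1)(k−1)+ℓ}), the bit-length of the t-th share equals (k−1)(ℓ_t − 1) + ℓ, where ℓ_t is the prefix-code length of t. In particular, using the Elias δ code, the share size equals (k−1)⌊lg t⌋ + 2(k−1)⌊lg(⌊lg t⌋ + 1)⌋ + ℓ. -/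
open Polynomial

theorem Polynomial.natDegree_modByMonic_X_pow_lt {R : Type*} [Ring R] [Nontrivial R] (p : R[X])
    {n : ℕ} (hn : n ≠ 0) : (p %ₘ X ^ n).natDegree < n := by
  have hXn : (X ^ n : R[X]) ≠ 1 := fun h => hn (by simpa using congrArg natDegree h)
  simpa using natDegree_modByMonic_lt p (monic_X_pow n) hXn

theorem stmt_12_general (k ℓ t ℓt : ℕ) (hℓ : 1 ≤ ℓ)
    (r : ℕ → (ZMod 2)[X]) (s y : (ZMod 2)[X]) :
    ((∑ j ∈ Finset.range (k - 1), r j * y ^ j + s * y ^ (k - 1)) %ₘ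
        (X ^ ((ℓt - 1) * (k - 1) + ℓ))).natDegree < (k - 1) * (ℓt - 1) + ℓ ∧
    (ℓt = Nat.log 2 t + 2 * Nat.log 2 (Nat.log 2 t + 1) + 1 →
      (k - 1) * (ℓt - 1) + ℓ =
        (k - 1) * Nat.log 2 t + 2 * (k - 1) * Nat.log 2 (Nat.log 2 t + 1) + ℓ) := by
  refine ⟨?_, fun hδ => ?_⟩
  · rw [mul_comm (k - 1)]
    exact natDegree_modByMonic_X_pow_lt _ (by omega)
  · rw [hδ, Nat.add_sub_cancel]
    ring

/-- Share size in the evolving `k`-threshold scheme over `F₂[x]`: the `t`-th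
share `Z_t = ∑_{j<k−1} r_j y^j + s y^{k−1} (mod x^{(ℓₜ−1)(k−1)+ℓ})` is a
polynomial of degree `< (k−1)(ℓₜ−1)+ℓ`, hence has bit-length
`(k−1)(ℓₜ−1)+ℓ`; with the Elias δ code, `ℓₜ = ⌊lg t⌋+2⌊lg(⌊lg t⌋+1)⌋+1` and
the share size equals `(k−1)⌊lg t⌋+2(k−1)⌊lg(⌊lg t⌋+1)⌋+ℓ`. -/
theorem stmt_12 (k ℓ t ℓt : ℕ) (hk : 2 ≤ k) (hℓ : 1 ≤ ℓ) (ht : 1 ≤ t)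
    (hℓt : 1 ≤ ℓt) (r : ℕ → (ZMod 2)[X]) (s y : (ZMod 2)[X]) :
    ((∑ j ∈ Finset.range (k - 1), r j * y ^ j + s * y ^ (k - 1)) %ₘ
        (X ^ ((ℓt - 1) * (k - 1) + ℓ))).natDegree < (k - 1) * (ℓt - 1) + ℓ ∧
    (ℓt = Nat.log 2 t + 2 * Nat.log 2 (Nat.log 2 t + 1) + 1 →
      (k - 1) * (ℓt - 1) + ℓ =
        (k - 1) * Nat.log 2 t + 2 * (k - 1) * Nat.log 2 (Nat.log 2 t + 1) + ℓ) :=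
  stmt_12_general k ℓ t ℓt hℓ r s y
end

section
/- Fix distinct polynomials y_{i_1}, ..., y_{i_{k−1}} (polynomial forms of distinct prefix codewords over F_p of lengths ℓ_{i_1} ≤ ... ≤ ℓ_{i_{k−1}}), moduli L_{i_m} = (ℓ_{i_m}−1)(k−1)+ℓ, target values z_{i_m} ∈ F_p[x]/x^{L_{i_m}}, and two secrets s_0 ≠ s_1 in F_p[x]/x^ℓ. For h ∈ {0,1}, let N_h be the number of tuples (r_{h,0}, ..., r_{h,k−2}) ∈ (F_p[x]/x^{L_{i_{k−1}}})^{k−1} satisfying z_{i_m} ≡ ∑_{j=0}^{k−2} r_{h,j} y_{i_m}^j + s_h y_{i_m}^{k−1} (mod x^{L_{i_m}}) for all 1 ≤ m ≤ k−1. Then N_0 = N_1. -/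
/-!
Since `∏ₘ (T - y_m)` vanishes at every `y_m` and is monic of degree `n`, the polynomial
`Tⁿ - ∏ₘ (T - y_m)` has degree `< n` and its coefficients `c_j` satisfy
`∑_j c_j y_mʲ = y_mⁿ` for all `m` (they are the signed elementary symmetric polynomials of
the `y_m`). Translating a solution `r` for the secret `a` by `(a - b) c` and reducing modulo
`X ^ N` therefore gives a solution for the secret `b`, because every modulus `X ^ L_m` divides
`X ^ N`. Translating back by `-(a - b) c` inverts this, so the two solution sets are in bijection.
-/

open Polynomial Finset

namespace Polynomial

variable {R : Type*} [CommRing R]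

theorem exists_sum_mul_pow_eq_pow {n : ℕ} (y : Fin n → R) :
    ∃ c : Fin n → R, ∀ m, ∑ j : Fin n, c j * y m ^ (j : ℕ) = y m ^ n := by
  nontriviality R
  obtain rfl | hn := eq_or_ne n 0
  · exact ⟨0, fun m => m.elim0⟩
  set Q : R[X] := ∏ m, (X - C (y m))
  have hQ : IsMonicOfDegree Q n :=
    ⟨by simp [Q], monic_prod_of_monic _ _ fun m _ => monic_X_sub_C (y m)⟩
  have hdeg : (X ^ n - Q).natDegree < n := by
    rw [← natDegree_neg, neg_sub]
    exact hQ.natDegree_sub_X_pow hn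
  refine ⟨fun j => (X ^ n - Q).coeff j, fun m => ?_⟩
  have hroot : Q.eval (y m) = 0 := by
    rw [eval_prod]
    exact prod_eq_zero (mem_univ m) (by simp)
  calc ∑ j : Fin n, (X ^ n - Q).coeff j * y m ^ (j : ℕ)
      = ∑ j ∈ range n, (X ^ n - Q).coeff j * y m ^ j :=
        Fin.sum_univ_eq_sum_range (fun j => (X ^ n - Q).coeff j * y m ^ j) n
    _ = (X ^ n - Q).eval (y m) := (eval_eq_sum_range' hdeg _).symm
    _ = y m ^ n := by simp [hroot]

variable [Nontrivial R] {N : ℕ}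

theorem natDegree_modByMonic_X_pow_lt_s17 (hN : 0 < N) (p : R[X]) : (p %ₘ X ^ N).natDegree < N := by
  simpa using natDegree_modByMonic_lt p (monic_X_pow N) fun h => by simpa [hN.ne'] using congrArg natDegree h

theorem modByMonic_X_pow_eq_self {p : R[X]} (hp : p.natDegree < N) : p %ₘ X ^ N = p := by
  rw [modByMonic_eq_self_iff (monic_X_pow N), degree_X_pow]
  exact degree_le_natDegree.trans_lt (by exact_mod_cast hp)

theorem modByMonic_X_pow_add_neg (hN : 0 < N) {p : R[X]} (hp : p.natDegree < N) (v : R[X]) :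
    ((p + v) %ₘ X ^ N + -v) %ₘ X ^ N = p := by
  rw [add_modByMonic, modByMonic_X_pow_eq_self (natDegree_modByMonic_X_pow_lt_s17 hN _),
    ← add_modByMonic, add_neg_cancel_right, modByMonic_X_pow_eq_self hp]

end Polynomial

section ShareSolutions

variable {R : Type*} [CommRing R] {n N : ℕ} {L : Fin n → ℕ} {y z : Fin n → R[X]}

def shareSolutions (N : ℕ) (L : Fin n → ℕ) (y z : Fin n → R[X]) (s : R[X]) :
    Set (Fin n → R[X]) :=
  {r | (∀ j, (r j).natDegree < N) ∧
    ∀ m, X ^ L m ∣ (∑ j : Fin n, r j * y m ^ (j : ℕ)) + s * y m ^ n - z m}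

variable [Nontrivial R]

theorem modByMonic_add_mem_shareSolutions (hN : 0 < N) (hL : ∀ m, L m ≤ N) {a b : R[X]}
    {t : Fin n → R[X]} (ht : ∀ m, ∑ j : Fin n, t j * y m ^ (j : ℕ) = (a - b) * y m ^ n)
    {r : Fin n → R[X]} (hr : r ∈ shareSolutions N L y z a) :
    (fun j => (r j + t j) %ₘ X ^ N) ∈ shareSolutions N L y z b := by
  refine ⟨fun j => natDegree_modByMonic_X_pow_lt_s17 hN _, fun m => ?_⟩
  have hreduce : X ^ L m ∣
      ∑ j : Fin n, ((r j + t j) %ₘ X ^ N - (r j + t j)) * y m ^ (j : ℕ) :=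
    dvd_sum fun j _ =>
      dvd_mul_of_dvd_left ((pow_dvd_pow X (hL m)).trans (dvd_modByMonic_sub _ _)) _
  have hsplit : (∑ j : Fin n, (r j + t j) %ₘ X ^ N * y m ^ (j : ℕ)) + b * y m ^ n - z m =
      ((∑ j : Fin n, r j * y m ^ (j : ℕ)) + a * y m ^ n - z m) +
        ∑ j : Fin n, ((r j + t j) %ₘ X ^ N - (r j + t j)) * y m ^ (j : ℕ) := by
    simp only [sub_mul, add_mul, sum_sub_distrib, sum_add_distrib, ht m]
    ring
  rw [hsplit]
  exact dvd_add (hr.2 m) hreduce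

noncomputable def shareSolutionsEquiv (hN : 0 < N) (hL : ∀ m, L m ≤ N) {a b : R[X]} {t : Fin n → R[X]}
    (ht : ∀ m, ∑ j : Fin n, t j * y m ^ (j : ℕ) = (a - b) * y m ^ n) :
    shareSolutions N L y z a ≃ shareSolutions N L y z b where
  toFun r := ⟨_, modByMonic_add_mem_shareSolutions hN hL ht r.2⟩
  invFun r := ⟨fun j => (r.1 j + -t j) %ₘ X ^ N,
    modByMonic_add_mem_shareSolutions hN hL (a := b) (b := a)
      (fun m => by simp only [neg_mul, sum_neg_distrib, ht m]; ring) r.2⟩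
  left_inv r := Subtype.ext <| funext fun j => modByMonic_X_pow_add_neg hN (r.2.1 j) (t j)
  right_inv r := Subtype.ext <| funext fun j => by
    simpa using modByMonic_X_pow_add_neg hN (r.2.1 j) (-t j)

theorem card_shareSolutions_eq (hN : 0 < N) (hL : ∀ m, L m ≤ N) (a b : R[X]) :
    Nat.card (shareSolutions N L y z a) = Nat.card (shareSolutions N L y z b) := by
  obtain ⟨c, hc⟩ := exists_sum_mul_pow_eq_pow y
  refine Nat.card_congr (shareSolutionsEquiv hN hL (t := fun j => (a - b) * c j) fun m => ?_)
  simp only [mul_assoc, ← mul_sum, hc]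

end ShareSolutions

/-- Security counting lemma: for distinct prefix-codeword polynomials
`y_m` with moduli `L m = (len m − 1)(k−1) + ℓ`, targets `z m`, and two
secrets `s₀ ≠ s₁` of degree `< ℓ`, the numbers of tuples
`(r_0, …, r_{k−2})` of polynomials of degree `< L_{max}` solving the
share equations for `s₀` and for `s₁` coincide. -/
theorem stmt_17 {F : Type*} [Field F]
    (k ℓ : ℕ) (hk : 2 ≤ k) (hℓ : 1 ≤ ℓ)
    (len : Fin (k - 1) → ℕ)
    (hmono : Monotone len)
    (y : Fin (k - 1) → F[X])
    (z : Fin (k - 1) → F[X])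
    (s₀ s₁ : F[X])
    (L : Fin (k - 1) → ℕ) (hL : ∀ m, L m = (len m - 1) * (k - 1) + ℓ)
    (Lmax : ℕ) (hLmax : Lmax = L ⟨k - 2, by omega⟩) :
    Nat.card {r : Fin (k - 1) → F[X] //
        (∀ j, (r j).natDegree < Lmax) ∧
        ∀ m, X ^ (L m) ∣
          (∑ j : Fin (k - 1), r j * y m ^ (j : ℕ)) + s₀ * y m ^ (k - 1) - z m}
    = Nat.card {r : Fin (k - 1) → F[X] //
        (∀ j, (r j).natDegree < Lmax) ∧
        ∀ m, X ^ (L m) ∣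
          (∑ j : Fin (k - 1), r j * y m ^ (j : ℕ)) + s₁ * y m ^ (k - 1) - z m} := by
  have hLmax_pos : 0 < Lmax := by
    rw [hLmax, hL]
    omega
  have hL_le : ∀ m, L m ≤ Lmax := fun m => by
    rw [hLmax, hL, hL]
    gcongr
    exact hmono (Fin.mk_le_mk.mpr (by omega))
  exact card_shareSolutions_eq hLmax_pos hL_le s₀ s₁
end
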